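/- Define erfc(x) = (2/√π) ∫_x^∞ e^{-t²} dt. For all S > 0 and H_x, H_y, H_z > 0, ∫_{ℝ³ \ B} exp(-S((x/H_x)² + (y/H_y)² + (z/H_z)²)) dx dy dz ≤ 3 (π/S)^{3/2} H_x H_y H_z · erfc(√S), where B = [-H_x, H_x] × [-H_y, H_y] × [-H_z, H_z]. -/

import Mathlib

/-!
The complement of the box is covered by the three slabs `|x| > H_x`, `|y| > H_y`, `|z| > H_z`.
The Gaussian factorises, so over each slab its integral is a one-dimensional tail
`∫_{|t| > H} exp(-S t²/H²) dt = H √(π/S) erfc(√S)` times two full Gaussian integrals `H √(π/S)`.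
-/

/-- The complementary error function `erfc(x) = (2/√π) ∫_x^∞ e^{-t²} dt`. -/
noncomputable def erfc (x : ℝ) : ℝ :=
  (2 / Real.sqrt Real.pi) * ∫ t in Set.Ioi x, Real.exp (-t ^ 2)

open MeasureTheory Set Real

theorem setIntegral_union_le_add {X : Type*} [MeasurableSpace X] {μ : Measure X} {f : X → ℝ}
    {s t : Set X} (ht : MeasurableSet t) (hf : IntegrableOn f (s ∪ t) μ)
    (hf₀ : 0 ≤ᵐ[μ.restrict s] f) :
    ∫ x in s ∪ t, f x ∂μ ≤ (∫ x in s, f x ∂μ) + ∫ x in t, f x ∂μ := by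
  rw [← sdiff_union_self, setIntegral_union disjoint_sdiff_left ht
    (hf.mono_set (sdiff_union_self ▸ subset_union_left)) (hf.mono_set subset_union_right)]
  exact add_le_add_left
    (setIntegral_mono_set (hf.mono_set subset_union_left) hf₀ sdiff_subset.eventuallyLE) _

theorem compl_prod_prod_eq_union {α β γ : Type*} (s : Set α) (t : Set β) (u : Set γ) :
    (s ×ˢ t ×ˢ u)ᶜ = sᶜ ×ˢ univ ×ˢ univ ∪ (univ ×ˢ tᶜ ×ˢ univ ∪ univ ×ˢ univ ×ˢ uᶜ) := by
  rw [compl_prod_eq_union, compl_prod_eq_union, prod_union, univ_prod_univ]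

section TripleProduct

variable {α β γ : Type*} [MeasurableSpace α] [MeasurableSpace β] [MeasurableSpace γ]
  {μ : Measure α} {ν : Measure β} {ρ : Measure γ} [SFinite μ] [SFinite ν] [SFinite ρ]

theorem setIntegral_prod_prod_mul (f : α → ℝ) (g : β → ℝ) (h : γ → ℝ)
    (s : Set α) (t : Set β) (u : Set γ) :
    ∫ p in s ×ˢ t ×ˢ u, f p.1 * (g p.2.1 * h p.2.2) ∂μ.prod (ν.prod ρ) =
      (∫ x in s, f x ∂μ) * ((∫ y in t, g y ∂ν) * ∫ z in u, h z ∂ρ) := by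
  rw [setIntegral_prod_mul f (fun q : β × γ => g q.1 * h q.2), setIntegral_prod_mul]

theorem setIntegral_compl_prod_prod_mul_le {f : α → ℝ} {g : β → ℝ} {h : γ → ℝ}
    (hf : Integrable f μ) (hg : Integrable g ν) (hh : Integrable h ρ)
    (hf₀ : 0 ≤ f) (hg₀ : 0 ≤ g) (hh₀ : 0 ≤ h)
    {s : Set α} {t : Set β} {u : Set γ} (ht : MeasurableSet t) (hu : MeasurableSet u) :
    ∫ p in (s ×ˢ t ×ˢ u)ᶜ, f p.1 * (g p.2.1 * h p.2.2) ∂μ.prod (ν.prod ρ) ≤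
      (∫ x in sᶜ, f x ∂μ) * ((∫ y, g y ∂ν) * ∫ z, h z ∂ρ) +
        ((∫ x, f x ∂μ) * ((∫ y in tᶜ, g y ∂ν) * ∫ z, h z ∂ρ) +
          (∫ x, f x ∂μ) * ((∫ y, g y ∂ν) * ∫ z in uᶜ, h z ∂ρ)) := by
  have hF : Integrable (fun p : α × β × γ => f p.1 * (g p.2.1 * h p.2.2)) (μ.prod (ν.prod ρ)) :=
    hf.mul_prod (hg.mul_prod hh)
  have hF₀ : 0 ≤ fun p : α × β × γ => f p.1 * (g p.2.1 * h p.2.2) := fun p =>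
    mul_nonneg (hf₀ _) (mul_nonneg (hg₀ _) (hh₀ _))
  have hslab₂ : MeasurableSet (univ ×ˢ tᶜ ×ˢ univ : Set (α × β × γ)) :=
    MeasurableSet.univ.prod (ht.compl.prod MeasurableSet.univ)
  have hslab₃ : MeasurableSet (univ ×ˢ univ ×ˢ uᶜ : Set (α × β × γ)) :=
    MeasurableSet.univ.prod (MeasurableSet.univ.prod hu.compl)
  rw [compl_prod_prod_eq_union]
  refine (setIntegral_union_le_add (hslab₂.union hslab₃) hF.integrableOn
    (.of_forall hF₀)).trans ?_
  grw [setIntegral_union_le_add hslab₃ hF.integrableOn (.of_forall hF₀)]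
  simp only [setIntegral_prod_prod_mul, setIntegral_univ, le_rfl]

end TripleProduct

theorem integral_exp_neg_mul_div_sq (S H : ℝ) :
    ∫ t, exp (-(S * (t / H) ^ 2)) = |H| * √(π / S) := by
  simp_rw [Measure.integral_comp_div (fun u => exp (-(S * u ^ 2))) H, ← neg_mul,
    integral_gaussian, smul_eq_mul]

theorem integrable_exp_neg_mul_div_sq {S H : ℝ} (hS : 0 < S) (hH : H ≠ 0) :
    Integrable fun t => exp (-(S * (t / H) ^ 2)) := by
  have hgauss : Integrable fun u => exp (-(S * u ^ 2)) := by
    simpa only [neg_mul] using integrable_exp_neg_mul_sq hS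
  exact hgauss.comp_div hH

theorem integral_compl_Icc_of_even {f : ℝ → ℝ} (hf : Integrable f) (heven : ∀ t, f (-t) = f t)
    {a : ℝ} (ha : 0 ≤ a) :
    ∫ t in (Icc (-a) a)ᶜ, f t = 2 * ∫ t in Ioi a, f t := by
  have hIio : ∫ t in Iio (-a), f t = ∫ t in Ioi a, f t := by
    rw [← integral_Iic_eq_integral_Iio, ← integral_comp_neg_Ioi]
    simp only [heven]
  have hcompl : (Icc (-a) a)ᶜ = Iio (-a) ∪ Ioi a := by
    ext t
    simp [or_iff_not_imp_left]
  have hdisj : Disjoint (Iio (-a)) (Ioi a) :=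
    (Iic_disjoint_Ioi (by linarith)).mono_left Iio_subset_Iic_self
  rw [hcompl, setIntegral_union hdisj measurableSet_Ioi hf.integrableOn hf.integrableOn, hIio,
    two_mul]

theorem integral_Ioi_exp_neg_sq (x : ℝ) :
    ∫ t in Ioi x, exp (-t ^ 2) = √π / 2 * erfc x := by
  have : √π ≠ 0 := (sqrt_pos.2 pi_pos).ne'
  rw [erfc]
  field_simp

theorem integral_Ioi_exp_neg_mul_div_sq {S H : ℝ} (hS : 0 < S) (hH : 0 < H) :
    ∫ t in Ioi H, exp (-(S * (t / H) ^ 2)) = H / √S * ∫ u in Ioi √S, exp (-u ^ 2) := by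
  have hc : 0 < √S / H := div_pos (sqrt_pos.2 hS) hH
  have hsq : ∀ t, S * (t / H) ^ 2 = (√S / H * t) ^ 2 := fun t => by
    rw [mul_pow, div_pow, div_pow, sq_sqrt hS.le]; ring
  simp_rw [hsq, integral_comp_mul_left_Ioi (fun u => exp (-u ^ 2)) H hc, smul_eq_mul,
    div_mul_cancel₀ _ hH.ne', inv_div]

theorem integral_compl_Icc_exp_neg_mul_div_sq {S H : ℝ} (hS : 0 < S) (hH : 0 < H) :
    ∫ t in (Icc (-H) H)ᶜ, exp (-(S * (t / H) ^ 2)) = H * √(π / S) * erfc √S := by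
  have heven : ∀ t, exp (-(S * (-t / H) ^ 2)) = exp (-(S * (t / H) ^ 2)) := fun t => by
    rw [neg_div, neg_sq]
  rw [integral_compl_Icc_of_even (integrable_exp_neg_mul_div_sq hS hH.ne') heven hH.le,
    integral_Ioi_exp_neg_mul_div_sq hS hH, integral_Ioi_exp_neg_sq, sqrt_div' _ hS.le]
  field_simp

/-- Window-truncation constant bound for the Gaussian window: the integral of the
anisotropic Gaussian over the complement of the box
`[-H_x,H_x] × [-H_y,H_y] × [-H_z,H_z]` is at most `3(π/S)^{3/2} H_x H_y H_z erfc(√S)`. -/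
theorem gaussian_window_truncation_bound (S Hx Hy Hz : ℝ)
    (hS : 0 < S) (hHx : 0 < Hx) (hHy : 0 < Hy) (hHz : 0 < Hz) :
    (∫ x in (Set.Icc (-Hx) Hx ×ˢ Set.Icc (-Hy) Hy ×ˢ Set.Icc (-Hz) Hz)ᶜ,
        Real.exp (-(S * ((x.1 / Hx) ^ 2 + (x.2.1 / Hy) ^ 2 + (x.2.2 / Hz) ^ 2)))) ≤
      3 * (Real.pi / S) ^ ((3 : ℝ) / 2) * (Hx * Hy * Hz) * erfc (Real.sqrt S) := by
  have hsplit : ∀ x y z : ℝ, exp (-(S * ((x / Hx) ^ 2 + (y / Hy) ^ 2 + (z / Hz) ^ 2))) =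
      exp (-(S * (x / Hx) ^ 2)) * (exp (-(S * (y / Hy) ^ 2)) * exp (-(S * (z / Hz) ^ 2))) :=
    fun x y z => by rw [← exp_add, ← exp_add]; ring_nf
  have hpow : (π / S) ^ ((3 : ℝ) / 2) = √(π / S) ^ 3 := by
    rw [rpow_div_two_eq_sqrt _ (by positivity)]
    norm_num
  simp_rw [hsplit, Measure.volume_eq_prod]
  refine (setIntegral_compl_prod_prod_mul_le (integrable_exp_neg_mul_div_sq hS hHx.ne')
    (integrable_exp_neg_mul_div_sq hS hHy.ne') (integrable_exp_neg_mul_div_sq hS hHz.ne')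
    (fun _ => (exp_pos _).le) (fun _ => (exp_pos _).le) (fun _ => (exp_pos _).le)
    measurableSet_Icc measurableSet_Icc).trans_eq ?_
  simp only [integral_exp_neg_mul_div_sq, integral_compl_Icc_exp_neg_mul_div_sq hS hHx,
    integral_compl_Icc_exp_neg_mul_div_sq hS hHy, integral_compl_Icc_exp_neg_mul_div_sq hS hHz,
    abs_of_pos hHx, abs_of_pos hHy, abs_of_pos hHz, hpow]
  ring
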